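/- Good-event estimate for the Feynman–Kac semigroup along the coupled chain: Assume hypothesis (C) with constants q ∈ [0,1), C > 0, and let V : X → ℝ be Lipschitz continuous. Then there exists a constant C_V < ∞, depending only on q, C, ‖V‖_L and the diameter of X, such that for every Lipschitz continuous f : X → ℝ, every n ≥ 1 and all x, x' ∈ X, |E[1_{B_n}·(f(x_n)·exp(V(x_1)+⋯+V(x_n)) − f(x_n')·exp(V(x_1')+⋯+V(x_n')))]| ≤ C_V·‖f‖_L·‖Q_n^V 1‖_∞·d(x,x'), where B_n = ∩_{j=0}^{n−1} A_j with A_j = {ω : d(x_{j+1}(ω), x_{j+1}'(ω)) ≤ q·d(x_j(ω), x_j'(ω))}, and ‖f‖_L = ‖f‖_∞ + Lip(f). -/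

import Mathlib

open MeasureTheory Filter Topology
open scoped ENNReal NNReal

noncomputable def FK {X : Type*} [MeasurableSpace X] (κ : X → Measure X) (V f : X → ℝ) (x : X) : ℝ :=
  ∫ y, Real.exp (V y) * f y ∂(κ x)

noncomputable def FKiter {X : Type*} [MeasurableSpace X] (κ : X → Measure X) (V : X → ℝ) :
    ℕ → (X → ℝ) → X → ℝ
  | 0 => fun f => f
  | n + 1 => fun f => FK κ V (FKiter κ V n f)

noncomputable def supNorm {X : Type*} (f : X → ℝ) : ℝ := ⨆ x, |f x|

noncomputable def lipConst {X : Type*} [MetricSpace X] (f : X → ℝ) : ℝ :=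
  sSup {c | ∃ x y, x ≠ y ∧ c = |f x - f y| / dist x y}

noncomputable def lipNorm {X : Type*} [MetricSpace X] (f : X → ℝ) : ℝ := supNorm f + lipConst f

/-- The coupled chain `(x_k, x_k')` driven by the maps `R, R'` and the noise sequence `ω`. -/
def chain {X Ω₀ : Type*} (R R' : X → X → Ω₀ → X) (x x' : X) : ℕ → (ℕ → Ω₀) → X × X
  | 0 => fun _ => (x, x')
  | k + 1 => fun ω =>
      (R (chain R R' x x' k ω).1 (chain R R' x x' k ω).2 (ω k),
       R' (chain R R' x x' k ω).1 (chain R R' x x' k ω).2 (ω k))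

/-- The squeezing event `A_j` for the coupled chain. -/
def eventA {X Ω₀ : Type*} [MetricSpace X] (R R' : X → X → Ω₀ → X) (x x' : X) (q : ℝ)
    (j : ℕ) : Set (ℕ → Ω₀) :=
  {ω | dist (chain R R' x x' (j + 1) ω).1 (chain R R' x x' (j + 1) ω).2
        ≤ q * dist (chain R R' x x' j ω).1 (chain R R' x x' j ω).2}

/-- The good event `B_k = ∩_{j<k} A_j`. -/
def eventB {X Ω₀ : Type*} [MetricSpace X] (R R' : X → X → Ω₀ → X) (x x' : X) (q : ℝ)
    (k : ℕ) : Set (ℕ → Ω₀) :=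
  ⋂ j ∈ Finset.range k, eventA R R' x x' q j

/-- The bad event `C_k = B_k ∩ A_kᶜ`. -/
def eventC {X Ω₀ : Type*} [MetricSpace X] (R R' : X → X → Ω₀ → X) (x x' : X) (q : ℝ)
    (k : ℕ) : Set (ℕ → Ω₀) :=
  eventB R R' x x' q k ∩ (eventA R R' x x' q k)ᶜ

/-!
On the good event `B_n` the two coordinates of the coupled chain contract geometrically,
`d(x_k, x_k') ≤ q^k d(x, x')`. Hence the Lipschitz potential gives
`|∑ V(x_i') - ∑ V(x_i)| ≤ Lip(V) q/(1-q) d(x, x')`, and the integrand is bounded pointwise on `B_n`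
by `C_V ‖f‖_L d(x, x') exp(∑ V(x_i))`. Integrating this bound over the whole space gives
`Q_n^V 1(x)` by the Feynman–Kac formula, proved by induction on `n` from the Markov property
of the noise: under `P₀^{⊗ℕ}` the first coordinate is independent of the shifted sequence,
whose law is again `P₀^{⊗ℕ}`.
-/

open ProbabilityTheory Finset

theorem sum_Icc_one_eq_sum_range {M : Type*} [AddCommMonoid M] (g : ℕ → M) (n : ℕ) :
    ∑ i ∈ Icc 1 n, g i = ∑ j ∈ range n, g (j + 1) := by
  rw [range_eq_Ico, sum_Ico_add', zero_add, Ico_add_one_right_eq_Icc]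

theorem integrable_exp_of_le {α : Type*} [MeasurableSpace α] {μ : Measure α} [IsFiniteMeasure μ]
    {g : α → ℝ} (hg : Measurable g) {M : ℝ} (hM : ∀ a, g a ≤ M) :
    Integrable (fun a => Real.exp (g a)) μ :=
  .of_bound hg.exp.aestronglyMeasurable (Real.exp M) <| ae_of_all _ fun a => by
    rw [Real.norm_eq_abs, abs_of_pos (Real.exp_pos _)]
    exact Real.exp_le_exp.2 (hM a)

theorem Real.abs_exp_sub_one_le_abs_mul_exp_abs (t : ℝ) :
    |Real.exp t - 1| ≤ |t| * Real.exp |t| := by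
  rcases le_or_gt 0 t with ht | ht
  · have hprod : Real.exp t * Real.exp (-t) = 1 := by
      rw [← Real.exp_add, add_neg_cancel, Real.exp_zero]
    rw [abs_of_nonneg ht, abs_of_nonneg (by linarith [Real.add_one_le_exp t])]
    nlinarith [Real.exp_pos t, Real.add_one_le_exp (-t)]
  · rw [abs_of_neg ht, abs_of_neg (by linarith [Real.exp_lt_one_iff.2 ht] : Real.exp t - 1 < 0)]
    nlinarith [Real.add_one_le_exp t, Real.one_le_exp (neg_nonneg.2 ht.le)]

theorem abs_mul_exp_sub_mul_exp_le (u v s s' : ℝ) :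
    |u * Real.exp s - v * Real.exp s'|
      ≤ (|u - v| + |v| * (|s' - s| * Real.exp |s' - s|)) * Real.exp s := by
  have hsplit : u * Real.exp s - v * Real.exp s'
      = (u - v) * Real.exp s - v * Real.exp s * (Real.exp (s' - s) - 1) := by
    rw [Real.exp_sub]; field_simp; ring
  rw [hsplit]
  refine (abs_sub _ _).trans ?_
  rw [abs_mul, abs_mul, abs_mul, abs_of_pos (Real.exp_pos s)]
  calc _ ≤ |u - v| * Real.exp s + |v| * Real.exp s * (|s' - s| * Real.exp |s' - s|) := by
        gcongr; exact Real.abs_exp_sub_one_le_abs_mul_exp_abs _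
    _ = _ := by ring

section Norms

variable {X : Type*}

theorem supNorm_nonneg (f : X → ℝ) : 0 ≤ supNorm f :=
  Real.iSup_nonneg fun _ => abs_nonneg _

theorem abs_le_supNorm [TopologicalSpace X] [CompactSpace X] {f : X → ℝ} (hf : Continuous f)
    (x : X) : |f x| ≤ supNorm f :=
  le_ciSup (isCompact_range hf.abs).bddAbove x

variable [MetricSpace X]

theorem lipConst_nonneg (f : X → ℝ) : 0 ≤ lipConst f :=
  Real.sSup_nonneg <| by rintro c ⟨u, v, -, rfl⟩; positivity

theorem lipNorm_nonneg (f : X → ℝ) : 0 ≤ lipNorm f :=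
  add_nonneg (supNorm_nonneg f) (lipConst_nonneg f)

theorem LipschitzWith.abs_sub_le_lipConst_mul {K : ℝ≥0} {f : X → ℝ} (hf : LipschitzWith K f)
    (a b : X) : |f a - f b| ≤ lipConst f * dist a b := by
  rcases eq_or_ne a b with rfl | hab
  · simp
  have hbdd : BddAbove {c | ∃ x y, x ≠ y ∧ c = |f x - f y| / dist x y} := by
    refine ⟨K, ?_⟩
    rintro c ⟨u, v, huv, rfl⟩
    rw [div_le_iff₀ (dist_pos.2 huv), ← Real.dist_eq]
    exact hf.dist_le_mul u v
  rw [← div_le_iff₀ (dist_pos.2 hab)]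
  exact le_csSup hbdd ⟨a, b, hab, rfl⟩

end Norms

section IID

variable {Ω₀ : Type*} [MeasurableSpace Ω₀] {μ : Measure Ω₀} [IsProbabilityMeasure μ]

theorem eq_infinitePi_of_map_fin {P : Measure (ℕ → Ω₀)}
    (hP : ∀ n : ℕ, P.map (fun ω (i : Fin n) => ω i) = Measure.pi fun _ : Fin n => μ) :
    P = Measure.infinitePi fun _ => μ := by
  classical
  refine Measure.eq_infinitePi _ fun s t ht => ?_
  obtain ⟨N, hN⟩ := s.exists_nat_subset_range
  have hbox : Set.pi (s : Set ℕ) t = (fun ω (i : Fin N) => ω i) ⁻¹'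
      Set.univ.pi fun i : Fin N => if (i : ℕ) ∈ s then t i else Set.univ := by
    ext ω
    simp only [Set.mem_pi, Finset.mem_coe, Set.mem_preimage, Set.mem_univ, forall_const]
    refine ⟨fun h i => ?_, fun h i hi => ?_⟩
    · split_ifs with hi
      · exact h i hi
      · trivial
    · simpa [hi] using h ⟨i, mem_range.1 (hN hi)⟩
  rw [hbox, ← Measure.map_apply (by fun_prop) (.univ_pi fun i => by split_ifs <;> simp [ht]),
    hP, Measure.pi_pi]
  simp only [apply_ite μ, measure_univ]
  rw [Fin.prod_univ_eq_prod_range (fun i => if i ∈ s then μ (t i) else 1), prod_ite_mem,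
    inter_eq_right.2 hN]

theorem measurePreserving_head_tail :
    MeasurePreserving (fun ω : ℕ → Ω₀ => (ω 0, fun i => ω (i + 1)))
      (Measure.infinitePi fun _ => μ) (μ.prod (Measure.infinitePi fun _ => μ)) := by
  have hindep : IndepFun (fun ω : ℕ → Ω₀ => ω 0) (fun ω i => ω (i + 1))
      (Measure.infinitePi fun _ => μ) := by
    refine IndepFun.indepFun_process (by fun_prop) (fun _ => by fun_prop) fun I => ?_
    have h := (iIndepFun_infinitePi (P := fun _ : ℕ => μ) (X := fun _ ω => ω)
      fun _ => measurable_id).indepFun_finset {0} (I.map ⟨(· + 1), add_left_injective 1⟩)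
      (by simp) (fun _ => by fun_prop)
    have hφ : Measurable fun v : ({0} : Finset ℕ) → Ω₀ => v ⟨0, mem_singleton_self 0⟩ :=
      measurable_pi_apply _
    have hψ : Measurable fun (v : (I.map ⟨(· + 1), add_left_injective 1⟩) → Ω₀) (i : I) =>
        v ⟨i + 1, mem_map_of_mem _ i.2⟩ :=
      measurable_pi_lambda _ fun _ => measurable_pi_apply _
    exact h.comp hφ hψ
  refine ⟨by fun_prop, ?_⟩
  rw [(indepFun_iff_map_prod_eq_prod_map_map (measurable_pi_apply 0).aemeasurable
    (measurable_pi_lambda _ fun i => measurable_pi_apply (i + 1)).aemeasurable).1 hindep,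
    Measure.infinitePi_map_eval, Measure.map_infinitePi_infinitePi_of_inj (add_left_injective 1)]

theorem integral_comp_head_tail {P : Measure (ℕ → Ω₀)} [IsFiniteMeasure P]
    (hsplit : MeasurePreserving (fun ω : ℕ → Ω₀ => (ω 0, fun i => ω (i + 1))) P (μ.prod P))
    {G : Ω₀ × (ℕ → Ω₀) → ℝ} (hG : Integrable G (μ.prod P)) :
    ∫ ω, G (ω 0, fun i => ω (i + 1)) ∂P = ∫ a, ∫ ω, G (a, ω) ∂P ∂μ := by
  rw [← integral_prod _ hG, ← hsplit.map_eq, integral_map hsplit.measurable.aemeasurable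
    (by rw [hsplit.map_eq]; exact hG.aestronglyMeasurable)]

end IID

section Chain

variable {X Ω₀ : Type*} {R R' : X → X → Ω₀ → X}

theorem chain_succ_eq_chain_tail (x x' : X) (k : ℕ) (ω : ℕ → Ω₀) :
    chain R R' x x' (k + 1) ω
      = chain R R' (R x x' (ω 0)) (R' x x' (ω 0)) k (fun i => ω (i + 1)) := by
  induction k with
  | zero => rfl
  | succ k ih => exact congrArg (fun p => (R p.1 p.2 (ω (k + 1)), R' p.1 p.2 (ω (k + 1)))) ih

variable [MeasurableSpace X] [MeasurableSpace Ω₀]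
  (hR : Measurable fun p : (X × X) × Ω₀ => R p.1.1 p.1.2 p.2)
  (hR' : Measurable fun p : (X × X) × Ω₀ => R' p.1.1 p.1.2 p.2)
include hR hR'

theorem measurable_chain_uncurry (k : ℕ) :
    Measurable fun p : (X × X) × (ℕ → Ω₀) => chain R R' p.1.1 p.1.2 k p.2 := by
  induction k with
  | zero => exact measurable_fst
  | succ k ih =>
    have hstep := ih.prodMk ((measurable_pi_apply k).comp measurable_snd)
    exact (hR.comp hstep).prodMk (hR'.comp hstep)

theorem measurable_chain (x x' : X) (k : ℕ) : Measurable (chain R R' x x' k) :=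
  (measurable_chain_uncurry hR hR' k).comp (measurable_const.prodMk measurable_id :
    Measurable fun ω : ℕ → Ω₀ => ((x, x'), ω))

theorem integrable_exp_sum_chain {P : Measure (ℕ → Ω₀)} [IsFiniteMeasure P] {V : X → ℝ}
    (hV : Measurable V) {M : ℝ} (hVM : ∀ y, V y ≤ M) (n : ℕ) (x x' : X) :
    Integrable (fun ω => Real.exp (∑ i ∈ Icc 1 n, V (chain R R' x x' i ω).1)) P :=
  integrable_exp_of_le (measurable_sum _ fun i _ => hV.comp (measurable_chain hR hR' x x' i).fst)
    fun _ => sum_le_card_nsmul _ _ _ fun _ _ => hVM _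

end Chain

section FeynmanKac

variable {X : Type*} [TopologicalSpace X] [MeasurableSpace X] {κ : X → Measure X} {V : X → ℝ}

theorem continuous_FKiter
    (hFeller : ∀ f : X → ℝ, Continuous f → Continuous fun x => ∫ y, f y ∂(κ x))
    (hV : Continuous V) {f : X → ℝ} (hf : Continuous f) (n : ℕ) :
    Continuous (FKiter κ V n f) := by
  induction n with
  | zero => exact hf
  | succ n ih => exact hFeller _ ((Real.continuous_exp.comp hV).mul ih)

variable [OpensMeasurableSpace X] {Ω₀ : Type*} [MeasurableSpace Ω₀]
  {P₀ : Measure Ω₀} [IsProbabilityMeasure P₀] {P : Measure (ℕ → Ω₀)} [IsProbabilityMeasure P]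
  {R R' : X → X → Ω₀ → X}

theorem integral_exp_sum_chain_eq_FKiter
    (hFeller : ∀ f : X → ℝ, Continuous f → Continuous fun x => ∫ y, f y ∂(κ x))
    (hV : Continuous V) {M : ℝ} (hVM : ∀ y, V y ≤ M)
    (hR : Measurable fun p : (X × X) × Ω₀ => R p.1.1 p.1.2 p.2)
    (hR' : Measurable fun p : (X × X) × Ω₀ => R' p.1.1 p.1.2 p.2)
    (hRlaw : ∀ x x', P₀.map (R x x') = κ x)
    (hsplit : MeasurePreserving (fun ω : ℕ → Ω₀ => (ω 0, fun i => ω (i + 1))) P (P₀.prod P))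
    (n : ℕ) (x x' : X) :
    ∫ ω, Real.exp (∑ i ∈ Icc 1 n, V (chain R R' x x' i ω).1) ∂P = FKiter κ V n 1 x := by
  simp_rw [sum_Icc_one_eq_sum_range]
  induction n generalizing x x' with
  | zero => simp [FKiter]
  | succ n ih =>
    have hxx' : Measurable fun a : Ω₀ => ((x, x'), a) := measurable_const.prodMk measurable_id
    have hRx : Measurable (R x x') := hR.comp hxx'
    have hR'x : Measurable (R' x x') := hR'.comp hxx'
    set F : Ω₀ × (ℕ → Ω₀) → ℝ := fun p => V (R x x' p.1)
      + ∑ j ∈ range n, V (chain R R' (R x x' p.1) (R' x x' p.1) (j + 1) p.2).1 with hF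
    have hFmeas : Measurable F := by
      have hstart : Measurable fun p : Ω₀ × (ℕ → Ω₀) => ((R x x' p.1, R' x x' p.1), p.2) :=
        ((hRx.comp measurable_fst).prodMk (hR'x.comp measurable_fst)).prodMk measurable_snd
      exact (hV.measurable.comp (hRx.comp measurable_fst)).add <| measurable_sum _ fun j _ =>
        hV.measurable.comp (measurable_fst.comp
          ((measurable_chain_uncurry hR hR' (j + 1)).comp hstart))
    have hFint : Integrable (fun p => Real.exp (F p)) (P₀.prod P) :=
      integrable_exp_of_le hFmeas (M := M + (range n).card • M) fun p =>
        add_le_add (hVM _) (sum_le_card_nsmul _ _ _ fun _ _ => hVM _)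
    have hF_shift : ∀ ω, ∑ j ∈ range (n + 1), V (chain R R' x x' (j + 1) ω).1
        = F (ω 0, fun i => ω (i + 1)) := fun ω => by
      rw [sum_range_succ', add_comm]
      simp only [hF, chain_succ_eq_chain_tail x x' _ ω]
      rfl
    calc ∫ ω, Real.exp (∑ j ∈ range (n + 1), V (chain R R' x x' (j + 1) ω).1) ∂P
        = ∫ a, ∫ ω, Real.exp (F (a, ω)) ∂P ∂P₀ := by
          simp_rw [hF_shift]
          exact integral_comp_head_tail hsplit hFint
      _ = ∫ a, Real.exp (V (R x x' a)) * FKiter κ V n 1 (R x x' a) ∂P₀ := by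
          simp_rw [hF, Real.exp_add, integral_const_mul, ih]
      _ = ∫ y, Real.exp (V y) * FKiter κ V n 1 y ∂(κ x) := by
          rw [← hRlaw x x', integral_map hRx.aemeasurable]
          exact ((Real.continuous_exp.comp hV).mul
            (continuous_FKiter hFeller hV continuous_const n)).aestronglyMeasurable
      _ = FKiter κ V (n + 1) 1 x := rfl

end FeynmanKac

section GoodEvent

variable {X Ω₀ : Type*} [MetricSpace X] {R R' : X → X → Ω₀ → X} {x x' : X} {q : ℝ} {n : ℕ}
  {ω : ℕ → Ω₀}

theorem dist_chain_le_of_mem_eventB (hq : 0 ≤ q) (hω : ω ∈ eventB R R' x x' q n) {k : ℕ}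
    (hk : k ≤ n) :
    dist (chain R R' x x' k ω).1 (chain R R' x x' k ω).2 ≤ q ^ k * dist x x' := by
  induction k with
  | zero => simp [chain]
  | succ k ih =>
    have hA : ω ∈ eventA R R' x x' q k := Set.mem_iInter₂.1 hω k (mem_range.2 hk)
    calc _ ≤ q * dist (chain R R' x x' k ω).1 (chain R R' x x' k ω).2 := hA
      _ ≤ q * (q ^ k * dist x x') := by gcongr; exact ih (by omega)
      _ = q ^ (k + 1) * dist x x' := by ring

theorem abs_sum_sub_sum_le_of_mem_eventB {V : X → ℝ} {K : ℝ≥0} (hV : LipschitzWith K V)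
    (hq0 : 0 ≤ q) (hq1 : q < 1) (hω : ω ∈ eventB R R' x x' q n) :
    |∑ i ∈ Icc 1 n, V (chain R R' x x' i ω).2 - ∑ i ∈ Icc 1 n, V (chain R R' x x' i ω).1|
      ≤ K * q / (1 - q) * dist x x' := by
  rw [← sum_sub_distrib]
  calc _ ≤ ∑ i ∈ Icc 1 n, K * (q ^ i * dist x x') := by
        refine (abs_sum_le_sum_abs _ _).trans (sum_le_sum fun i hi => ?_)
        rw [← Real.dist_eq, dist_comm]
        exact (hV.dist_le_mul _ _).trans
          (by gcongr; exact dist_chain_le_of_mem_eventB hq0 hω (mem_Icc.1 hi).2)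
    _ = K * dist x x' * ∑ i ∈ Ico 1 (n + 1), q ^ i := by
        rw [Ico_add_one_right_eq_Icc, mul_sum]; exact sum_congr rfl fun _ _ => by ring
    _ ≤ K * dist x x' * (q ^ 1 / (1 - q)) := by
        gcongr; exact geom_sum_Ico_le_of_lt_one hq0 hq1
    _ = K * q / (1 - q) * dist x x' := by ring

/-- The constant `C_V`, for `K = Lip(V)` and `D = diam X`. -/
noncomputable def goodEventConst (K q D : ℝ) : ℝ :=
  1 + K * q / (1 - q) * Real.exp (K * q / (1 - q) * D)

theorem goodEventConst_nonneg {K D : ℝ} (hK : 0 ≤ K) (hq0 : 0 ≤ q) (hq1 : q < 1) :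
    0 ≤ goodEventConst K q D :=
  add_nonneg zero_le_one (mul_nonneg (div_nonneg (by positivity) (by linarith)) (by positivity))

theorem abs_mul_exp_sum_chain_sub_le_of_mem_eventB [CompactSpace X] {V f : X → ℝ} {KV Kf : ℝ≥0}
    (hV : LipschitzWith KV V) (hf : LipschitzWith Kf f) (hq0 : 0 ≤ q) (hq1 : q < 1)
    (hω : ω ∈ eventB R R' x x' q n) :
    |f (chain R R' x x' n ω).1 * Real.exp (∑ i ∈ Icc 1 n, V (chain R R' x x' i ω).1)
        - f (chain R R' x x' n ω).2 * Real.exp (∑ i ∈ Icc 1 n, V (chain R R' x x' i ω).2)|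
      ≤ goodEventConst KV q (Metric.diam (Set.univ : Set X)) * lipNorm f * dist x x'
          * Real.exp (∑ i ∈ Icc 1 n, V (chain R R' x x' i ω).1) := by
  rw [goodEventConst]
  set c := (KV : ℝ) * q / (1 - q)
  have hc : 0 ≤ c := div_nonneg (by positivity) (by linarith)
  have hdD : dist x x' ≤ Metric.diam (Set.univ : Set X) :=
    Metric.dist_le_diam_of_mem Metric.isBounded_of_compactSpace (Set.mem_univ _) (Set.mem_univ _)
  have hSS' := abs_sum_sub_sum_le_of_mem_eventB hV hq0 hq1 hω
  have hdist : dist (chain R R' x x' n ω).1 (chain R R' x x' n ω).2 ≤ dist x x' :=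
    (dist_chain_le_of_mem_eventB hq0 hω le_rfl).trans
      (mul_le_of_le_one_left dist_nonneg (pow_le_one₀ hq0 hq1.le))
  refine (abs_mul_exp_sub_mul_exp_le _ _ _ _).trans ?_
  gcongr ?_ * _
  have hexp := mul_le_mul hSS' (Real.exp_le_exp.2 (hSS'.trans (mul_le_mul_of_nonneg_left hdD hc)))
    (Real.exp_pos _).le (mul_nonneg hc dist_nonneg)
  calc _ ≤ lipConst f * dist x x'
        + supNorm f * (c * dist x x' * Real.exp (c * Metric.diam (Set.univ : Set X))) :=
        add_le_add ((hf.abs_sub_le_lipConst_mul _ _).trans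
            (mul_le_mul_of_nonneg_left hdist (lipConst_nonneg f)))
          (mul_le_mul (abs_le_supNorm hf.continuous _) hexp (by positivity) (supNorm_nonneg f))
    _ = lipConst f * dist x x'
        + supNorm f * (c * Real.exp (c * Metric.diam (Set.univ : Set X))) * dist x x' := by ring
    _ ≤ lipNorm f * dist x x'
        + lipNorm f * (c * Real.exp (c * Metric.diam (Set.univ : Set X))) * dist x x' := by
        gcongr
        · exact le_add_of_nonneg_left (supNorm_nonneg f)
        · exact le_add_of_nonneg_right (lipConst_nonneg f)
    _ = _ := by ring

theorem measurableSet_eventB [MeasurableSpace X] [OpensMeasurableSpace X]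
    [SecondCountableTopology X] [MeasurableSpace Ω₀]
    (hR : Measurable fun p : (X × X) × Ω₀ => R p.1.1 p.1.2 p.2)
    (hR' : Measurable fun p : (X × X) × Ω₀ => R' p.1.1 p.1.2 p.2) :
    MeasurableSet (eventB R R' x x' q n) := by
  refine .biInter (Set.to_countable _) fun j _ => measurableSet_le ?_ ?_
  · exact (measurable_chain hR hR' x x' (j + 1)).fst.dist
      (measurable_chain hR hR' x x' (j + 1)).snd
  · exact measurable_const.mul
      ((measurable_chain hR hR' x x' j).fst.dist (measurable_chain hR hR' x x' j).snd)

end GoodEvent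

theorem good_event_FK_estimate_general
    {X : Type*} [MetricSpace X] [CompactSpace X] [MeasurableSpace X] [BorelSpace X]
    (κ : X → Measure X)
    (hFeller : ∀ f : X → ℝ, Continuous f → Continuous fun x => ∫ y, f y ∂(κ x))
    {Ω₀ : Type*} [MeasurableSpace Ω₀] (P₀ : Measure Ω₀) [IsProbabilityMeasure P₀]
    (q : ℝ) (hq0 : 0 ≤ q) (hq1 : q < 1)
    (R R' : X → X → Ω₀ → X)
    (hRmeas : Measurable fun p : (X × X) × Ω₀ => R p.1.1 p.1.2 p.2)
    (hR'meas : Measurable fun p : (X × X) × Ω₀ => R' p.1.1 p.1.2 p.2)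
    (hRlaw : ∀ x x' : X, Measure.map (R x x') P₀ = κ x)
    -- `P` is the countable product measure `P₀^{⊗ℕ}` on `Ω = Ω₀^ℕ`
    (P : Measure (ℕ → Ω₀)) [IsProbabilityMeasure P]
    (hP : ∀ n : ℕ, Measure.map (fun ω (i : Fin n) => ω i) P = Measure.pi fun _ : Fin n => P₀)
    (V : X → ℝ) (KV : ℝ≥0) (hV : LipschitzWith KV V) :
    ∃ CV : ℝ, ∀ (f : X → ℝ) (Kf : ℝ≥0), LipschitzWith Kf f →
      ∀ (n : ℕ), 1 ≤ n → ∀ (x x' : X),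
        |∫ ω in eventB R R' x x' q n,
            (f (chain R R' x x' n ω).1
                * Real.exp (∑ i ∈ Finset.Icc 1 n, V (chain R R' x x' i ω).1)
              - f (chain R R' x x' n ω).2
                * Real.exp (∑ i ∈ Finset.Icc 1 n, V (chain R R' x x' i ω).2)) ∂P|
          ≤ CV * lipNorm f * supNorm (FKiter κ V n 1) * dist x x' := by
  obtain ⟨M, hM⟩ := (isCompact_range hV.continuous).bddAbove
  have hVM : ∀ y, V y ≤ M := fun y => hM ⟨y, rfl⟩
  have hsplit : MeasurePreserving (fun ω : ℕ → Ω₀ => (ω 0, fun i => ω (i + 1))) P (P₀.prod P) := by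
    rw [eq_infinitePi_of_map_fin hP]
    exact measurePreserving_head_tail
  set CV := goodEventConst KV q (Metric.diam (Set.univ : Set X))
  refine ⟨CV, fun f Kf hf n _ x x' => ?_⟩
  have hK : 0 ≤ CV * lipNorm f :=
    mul_nonneg (goodEventConst_nonneg KV.coe_nonneg hq0 hq1) (lipNorm_nonneg f)
  have hint := (integrable_exp_sum_chain hRmeas hR'meas (P := P) hV.continuous.measurable hVM
    n x x').const_mul (CV * lipNorm f * dist x x')
  calc _ ≤ ∫ ω in eventB R R' x x' q n, CV * lipNorm f * dist x x'
          * Real.exp (∑ i ∈ Icc 1 n, V (chain R R' x x' i ω).1) ∂P := by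
        rw [← Real.norm_eq_abs]
        exact norm_integral_le_of_norm_le hint.integrableOn
          (ae_restrict_of_forall_mem (measurableSet_eventB hRmeas hR'meas) fun ω hω =>
            abs_mul_exp_sum_chain_sub_le_of_mem_eventB hV hf hq0 hq1 hω)
    _ ≤ ∫ ω, CV * lipNorm f * dist x x'
          * Real.exp (∑ i ∈ Icc 1 n, V (chain R R' x x' i ω).1) ∂P :=
        setIntegral_le_integral hint <| ae_of_all _ fun _ =>
          mul_nonneg (mul_nonneg hK dist_nonneg) (Real.exp_pos _).le
    _ = CV * lipNorm f * dist x x' * FKiter κ V n 1 x := by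
        rw [integral_const_mul, integral_exp_sum_chain_eq_FKiter hFeller hV.continuous hVM hRmeas
          hR'meas hRlaw hsplit]
    _ ≤ CV * lipNorm f * supNorm (FKiter κ V n 1) * dist x x' := by
        rw [mul_right_comm _ (dist x x')]
        gcongr
        exact (le_abs_self _).trans
          (abs_le_supNorm (continuous_FKiter hFeller hV.continuous continuous_const n) x)

/-- Good-event estimate for the Feynman–Kac semigroup along the coupled
chain: there is `C_V < ∞` such that
`|E[1_{B_n}·(f(x_n)e^{ΣV(x_i)} − f(x_n')e^{ΣV(x_i')})]| ≤ C_V·‖f‖_L·‖Q_n^V 1‖_∞·d(x,x')`. -/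
theorem good_event_FK_estimate
    {X : Type*} [MetricSpace X] [CompactSpace X] [MeasurableSpace X] [BorelSpace X]
    (κ : X → Measure X) (hκmeas : Measurable κ)
    (hκprob : ∀ x, IsProbabilityMeasure (κ x))
    (hFeller : ∀ f : X → ℝ, Continuous f → Continuous fun x => ∫ y, f y ∂(κ x))
    {Ω₀ : Type*} [MeasurableSpace Ω₀] (P₀ : Measure Ω₀) [IsProbabilityMeasure P₀]
    (q : ℝ) (hq0 : 0 ≤ q) (hq1 : q < 1) (C : ℝ) (hC : 0 < C)
    (R R' : X → X → Ω₀ → X)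
    (hRmeas : Measurable fun p : (X × X) × Ω₀ => R p.1.1 p.1.2 p.2)
    (hR'meas : Measurable fun p : (X × X) × Ω₀ => R' p.1.1 p.1.2 p.2)
    (hRlaw : ∀ x x' : X, Measure.map (R x x') P₀ = κ x)
    (hR'law : ∀ x x' : X, Measure.map (R' x x') P₀ = κ x')
    (hcouple : ∀ x x' : X,
      P₀ {ω | q * dist x x' < dist (R x x' ω) (R' x x' ω)} ≤ ENNReal.ofReal (C * dist x x'))
    -- `P` is the countable product measure `P₀^{⊗ℕ}` on `Ω = Ω₀^ℕ`
    (P : Measure (ℕ → Ω₀)) [IsProbabilityMeasure P]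
    (hP : ∀ n : ℕ, Measure.map (fun ω (i : Fin n) => ω i) P = Measure.pi fun _ : Fin n => P₀)
    (V : X → ℝ) (KV : ℝ≥0) (hV : LipschitzWith KV V) :
    ∃ CV : ℝ, ∀ (f : X → ℝ) (Kf : ℝ≥0), LipschitzWith Kf f →
      ∀ (n : ℕ), 1 ≤ n → ∀ (x x' : X),
        |∫ ω in eventB R R' x x' q n,
            (f (chain R R' x x' n ω).1
                * Real.exp (∑ i ∈ Finset.Icc 1 n, V (chain R R' x x' i ω).1)
              - f (chain R R' x x' n ω).2
                * Real.exp (∑ i ∈ Finset.Icc 1 n, V (chain R R' x x' i ω).2)) ∂P|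
          ≤ CV * lipNorm f * supNorm (FKiter κ V n 1) * dist x x' :=
  good_event_FK_estimate_general κ hFeller P₀ q hq0 hq1 R R' hRmeas hR'meas hRlaw P hP V KV hV
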